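/- Suppose G satisfies the doubled crystal axioms and w → z is an edge labeled 2 or 2'. Then the {1,1'}-string through w is collapsed if and only if the {1,1'}-string through z is collapsed and φ_1(z) = φ_1(w). -/

import Mathlib

/-- A "doubled crystal": a finite directed graph with vertices weighted by
`ℤ_{≥0}^n` and edges labeled `1', 1, …, (n-1)', n-1`, satisfying the axioms
(B1)–(B3), (K), (A1)–(A8) and the dual axioms (A1*)–(A8*) of
Gillespie–Levinson's "Axioms for shifted tableau crystals".

`F i false` is the unprimed lowering operator `f_i`, `F i true` is the primed
lowering operator `f_i'`; similarly for the raising operators `E`.  The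
statistics `eps, phi` are the total distances to the top and bottom of the
`{i,i'}`-string; `epsP, phiP` count only primed edges and `epsH, phiH`
count only unprimed edges. -/
structure DoubledCrystal (n : ℕ) where
  B : Type
  fintype : Fintype B
  F : Fin (n - 1) → Bool → B → Option B
  E : Fin (n - 1) → Bool → B → Option B
  wt : B → Fin n → ℕ
  eps : Fin (n - 1) → B → ℕ
  phi : Fin (n - 1) → B → ℕ
  epsP : Fin (n - 1) → B → ℕ
  phiP : Fin (n - 1) → B → ℕ
  epsH : Fin (n - 1) → B → ℕ
  phiH : Fin (n - 1) → B → ℕ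
  /-- `e_i, f_i` (and `e_i', f_i'`) are partial inverses. -/
  inverse : ∀ (i : Fin (n - 1)) (p : Bool) (x y : B),
    F i p x = some y ↔ E i p y = some x
  /-- (K1): effect of a raising operator on the weight. -/
  K1wt : ∀ (i : Fin (n - 1)) (p : Bool) (x y : B), E i p x = some y →
    ∀ j : Fin n, (wt y j : ℤ) = (wt x j : ℤ) +
      (if (j : ℕ) = (i : ℕ) then 1 else if (j : ℕ) = (i : ℕ) + 1 then -1 else 0)
  /-- (K1): effect of a raising operator on the statistics `ε_i, φ_i`. -/
  K1len : ∀ (i : Fin (n - 1)) (p : Bool) (x y : B), E i p x = some y →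
    eps i y + 1 = eps i x ∧ phi i y = phi i x + 1
  /-- (K2): `φ_i(x) - ε_i(x) = wt_i(x) - wt_{i+1}(x)`. -/
  K2 : ∀ (i : Fin (n - 1)) (x : B),
    (phi i x : ℤ) - (eps i x : ℤ) =
      (wt x ⟨(i : ℕ), by have := i.isLt; omega⟩ : ℤ) -
      (wt x ⟨(i : ℕ) + 1, by have := i.isLt; omega⟩ : ℤ)
  /-- The unprimed/primed lowering operators are defined iff `φ̂_i`/`φ'_i` is positive. -/
  F_none : ∀ (i : Fin (n - 1)) (x : B),
    (F i false x = none ↔ phiH i x = 0) ∧ (F i true x = none ↔ phiP i x = 0)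
  /-- The unprimed/primed raising operators are defined iff `ε̂_i`/`ε'_i` is positive. -/
  E_none : ∀ (i : Fin (n - 1)) (x : B),
    (E i false x = none ↔ epsH i x = 0) ∧ (E i true x = none ↔ epsP i x = 0)
  /-- Along an unprimed `i`-edge, the unprimed statistics shift by one. -/
  Fstep : ∀ (i : Fin (n - 1)) (x y : B), F i false x = some y →
    epsH i y = epsH i x + 1 ∧ phiH i x = phiH i y + 1
  /-- Along a primed `i`-edge, the primed statistics shift by one. -/
  FstepP : ∀ (i : Fin (n - 1)) (x y : B), F i true x = some y →
    epsP i y = epsP i x + 1 ∧ phiP i x = phiP i y + 1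
  /-- Along a strictly unprimed `i`-edge (separated string), the primed statistics
  do not change. -/
  Fsep : ∀ (i : Fin (n - 1)) (x y : B), F i false x = some y → F i true x ≠ some y →
    epsP i y = epsP i x ∧ phiP i y = phiP i x
  /-- Along a strictly primed `i`-edge (separated string), the unprimed statistics
  do not change. -/
  FsepP : ∀ (i : Fin (n - 1)) (x y : B), F i true x = some y → F i false x ≠ some y →
    epsH i y = epsH i x ∧ phiH i y = phiH i x
  /-- (B1): every vertex lies either on a collapsed `{i,i'}`-string (all edges both
  primed and unprimed, all statistics equal, with top/bottom characterized by
  the vanishing of `wt_{i+1}`/`wt_i`), or on a separated string (total statistics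
  split into primed and unprimed parts, with exactly one primed edge between
  the top and the bottom). -/
  B1 : ∀ (i : Fin (n - 1)) (v : B),
    (F i false v = F i true v ∧ E i false v = E i true v ∧
      epsP i v = eps i v ∧ epsH i v = eps i v ∧
      phiP i v = phi i v ∧ phiH i v = phi i v ∧
      (eps i v = 0 ↔ wt v ⟨(i : ℕ) + 1, by have := i.isLt; omega⟩ = 0) ∧
      (phi i v = 0 ↔ wt v ⟨(i : ℕ), by have := i.isLt; omega⟩ = 0)) ∨
    (eps i v = epsP i v + epsH i v ∧ phi i v = phiP i v + phiH i v ∧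
      epsP i v + phiP i v = 1)
  /-- (B1): if `wt_{i+1}(v) = 0` then `v` is the top of a collapsed `{i,i'}`-string. -/
  B1top : ∀ (i : Fin (n - 1)) (v : B),
    wt v ⟨(i : ℕ) + 1, by have := i.isLt; omega⟩ = 0 →
      eps i v = 0 ∧ F i false v = F i true v
  /-- (B1): if `wt_i(v) = 0` then `v` is the bottom of a collapsed `{i,i'}`-string. -/
  B1bot : ∀ (i : Fin (n - 1)) (v : B),
    wt v ⟨(i : ℕ), by have := i.isLt; omega⟩ = 0 →
      phi i v = 0 ∧ E i false v = E i true v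
  /-- (B2): distant edges commute (lowering). -/
  B2f : ∀ (i j : Fin (n - 1)) (p q : Bool) (w x y : B),
    ((i : ℕ) + 1 < (j : ℕ) ∨ (j : ℕ) + 1 < (i : ℕ)) →
    F i p w = some x → F j q w = some y →
    ∃ z, F j q x = some z ∧ F i p y = some z
  /-- (B2): distant edges commute (raising). -/
  B2e : ∀ (i j : Fin (n - 1)) (p q : Bool) (w x y : B),
    ((i : ℕ) + 1 < (j : ℕ) ∨ (j : ℕ) + 1 < (i : ℕ)) →
    E i p w = some x → E j q w = some y →
    ∃ z, E j q x = some z ∧ E i p y = some z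
  /-- (B3): the lengths axiom for an `(i±1)`- or `(i±1)'`-edge `z → w`. -/
  B3 : ∀ (i j : Fin (n - 1)) (p : Bool) (z w : B),
    ((i : ℕ) = (j : ℕ) + 1 ∨ (j : ℕ) = (i : ℕ) + 1) →
    F j p z = some w →
    (eps i w = eps i z ∧ phi i w = phi i z + 1) ∨
    (eps i w + 1 = eps i z ∧ phi i w = phi i z)
  /-- (A1) Primed square. -/
  A1 : ∀ (i j : Fin (n - 1)) (w x y : B), (i : ℕ) + 1 = (j : ℕ) →
    F i true w = some x → F j true w = some y →
    ∃ z, F j true x = some z ∧ F i true y = some z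
  /-- (A2) Half-solid square. -/
  A2 : ∀ (i j : Fin (n - 1)) (w x y : B), (i : ℕ) + 1 = (j : ℕ) →
    F i true w = some x → F j true w = some y →
    (((∃ z, F j false x = some z ∧ F i false y = some z) ∧
        F i true y ≠ F i false y) ↔
      (eps i w = eps i y ∧ eps j w = eps j x ∧ phi j w = 1 ∧ phiH j w = 0))
  /-- (A3) Square for `{f_i', f_{i+1}}`. -/
  A3 : ∀ (i j : Fin (n - 1)) (w x y : B), (i : ℕ) + 1 = (j : ℕ) →
    F i true w = some x → F j false w = some y →
    (F j true w ≠ some y ∨ F i false w ≠ some x) →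
    ∃ z, F j false x = some z ∧ F i true y = some z
  /-- (A4) Square for `{f_i, f_{i+1}'}`. -/
  A4 : ∀ (i j : Fin (n - 1)) (w x y : B), (i : ℕ) + 1 = (j : ℕ) →
    F i false w = some x → F j true w = some y →
    ((∃ z, F j true x = some z ∧ F i false y = some z) ↔ 0 < epsH i w)
  /-- (A5) Half-primed square. -/
  A5 : ∀ (i j : Fin (n - 1)) (w x y : B), (i : ℕ) + 1 = (j : ℕ) →
    F i false w = some x → F j false w = some y → F i true w = none →
    ((∃ z, F j true x = some z ∧ F i true y = some z) ↔
      (eps i w = eps i y + 1 ∧ eps j w = eps j x + 1))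
  /-- (A6) Square. -/
  A6 : ∀ (i j : Fin (n - 1)) (w x y : B), (i : ℕ) + 1 = (j : ℕ) →
    F i false w = some x → F j false w = some y → F i true w = none →
    ((∃ z, F j false x = some z ∧ F i false y = some z) ↔
      ((eps i w = eps i y + 1 ∧ eps j w = eps j x) ∨
       (eps i w = eps i y ∧ eps j w = eps j x + 1)))
  /-- (A7) Half-primed octagon. -/
  A7 : ∀ (i j : Fin (n - 1)) (w x y : B), (i : ℕ) + 1 = (j : ℕ) →
    F i false w = some x → F j false w = some y → F i true w = none →
    (((∃ z, ((F i false y).bind (F i true)).bind (F j false) = some z ∧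
            ((F j false x).bind (F j false)).bind (F i true) = some z) ∧
        F j false x ≠ F i false y) ↔
      (eps i w = eps i y ∧ eps j w = eps j x ∧ epsH i w + 1 = epsH i y))
  /-- (A8) Octagon. -/
  A8 : ∀ (i j : Fin (n - 1)) (w x y : B), (i : ℕ) + 1 = (j : ℕ) →
    F i false w = some x → F j false w = some y → F i true w = none →
    (((∃ z, ((F i false y).bind (F i false)).bind (F j false) = some z ∧
            ((F j false x).bind (F j false)).bind (F i false) = some z) ∧
        F j false x ≠ F i false y) ↔
      (eps i w = eps i y ∧ eps j w = eps j x ∧ 2 ≤ phiH i y))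
  /-- (A1*) Dual primed square. -/
  A1d : ∀ (i j : Fin (n - 1)) (w x y : B), (i : ℕ) + 1 = (j : ℕ) →
    E j true w = some x → E i true w = some y →
    ∃ z, E i true x = some z ∧ E j true y = some z
  /-- (A2*) Dual half-solid square. -/
  A2d : ∀ (i j : Fin (n - 1)) (w x y : B), (i : ℕ) + 1 = (j : ℕ) →
    E j true w = some x → E i true w = some y →
    (((∃ z, E j false y = some z ∧ E i false x = some z) ∧
        E j true y ≠ E j false y) ↔
      (phi j w = phi j y ∧ phi i w = phi i x ∧ eps i w = 1 ∧ epsH i w = 0))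
  /-- (A3*) Dual square for `{e_{i+1}', e_i}`. -/
  A3d : ∀ (i j : Fin (n - 1)) (w x y : B), (i : ℕ) + 1 = (j : ℕ) →
    E j true w = some x → E i false w = some y →
    (E i true w ≠ some y ∨ E j false w ≠ some x) →
    ∃ z, E i false x = some z ∧ E j true y = some z
  /-- (A4*) Dual square for `{e_{i+1}, e_i'}`. -/
  A4d : ∀ (i j : Fin (n - 1)) (w x y : B), (i : ℕ) + 1 = (j : ℕ) →
    E j false w = some x → E i true w = some y →
    ((∃ z, E i true x = some z ∧ E j false y = some z) ↔ 0 < phiH j w)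
  /-- (A5*) Dual half-primed square. -/
  A5d : ∀ (i j : Fin (n - 1)) (w x y : B), (i : ℕ) + 1 = (j : ℕ) →
    E j false w = some x → E i false w = some y → E j true w = none →
    ((∃ z, E j true y = some z ∧ E i true x = some z) ↔
      (phi j w = phi j y + 1 ∧ phi i w = phi i x + 1))
  /-- (A6*) Dual square. -/
  A6d : ∀ (i j : Fin (n - 1)) (w x y : B), (i : ℕ) + 1 = (j : ℕ) →
    E j false w = some x → E i false w = some y → E j true w = none →
    ((∃ z, E j false y = some z ∧ E i false x = some z) ↔
      ((phi j w = phi j y + 1 ∧ phi i w = phi i x) ∨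
       (phi j w = phi j y ∧ phi i w = phi i x + 1)))
  /-- (A7*) Dual half-primed octagon. -/
  A7d : ∀ (i j : Fin (n - 1)) (w x y : B), (i : ℕ) + 1 = (j : ℕ) →
    E j false w = some x → E i false w = some y → E j true w = none →
    (((∃ z, ((E j false y).bind (E j true)).bind (E i false) = some z ∧
            ((E i false x).bind (E i false)).bind (E j true) = some z) ∧
        E j false y ≠ E i false x) ↔
      (phi j w = phi j y ∧ phi i w = phi i x ∧ phiH j w + 1 = phiH j y))
  /-- (A8*) Dual octagon. -/
  A8d : ∀ (i j : Fin (n - 1)) (w x y : B), (i : ℕ) + 1 = (j : ℕ) →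
    E j false w = some x → E i false w = some y → E j true w = none →
    (((∃ z, ((E j false y).bind (E j false)).bind (E i false) = some z ∧
            ((E i false x).bind (E i false)).bind (E j false) = some z) ∧
        E j false y ≠ E i false x) ↔
      (phi j w = phi j y ∧ phi i w = phi i x ∧ 2 ≤ epsH j y))

namespace DoubledCrystal

variable {n : ℕ}

/-- One step along an `{i,i'}`-edge. -/
def stringStep (C : DoubledCrystal n) (i : Fin (n - 1)) (x y : C.B) : Prop :=
  ∃ p, C.F i p x = some y

/-- `u` lies on the `{i,i'}`-string through `v`. -/
def SameString (C : DoubledCrystal n) (i : Fin (n - 1)) (v u : C.B) : Prop :=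
  Relation.EqvGen (C.stringStep i) v u

/-- The `{i,i'}`-string through `v` is collapsed: every unprimed edge on it
coincides with the corresponding primed edge. -/
def Collapsed (C : DoubledCrystal n) (i : Fin (n - 1)) (v : C.B) : Prop :=
  ∀ u, C.SameString i v u → C.F i false u = C.F i true u

/-- One step along any edge of the graph. -/
def step (C : DoubledCrystal n) (x y : C.B) : Prop :=
  ∃ i p, C.F i p x = some y

end DoubledCrystal

namespace DoubledCrystal

variable {n : ℕ}

lemma phi_zero_aux (C : DoubledCrystal n) (i : Fin (n - 1)) (v : C.B)
    (h : C.phi i v = 0) : C.phiH i v = 0 ∧ C.phiP i v = 0 := by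
  rcases C.B1 i v with ⟨_, _, _, _, h1, h2, _⟩ | ⟨_, h1, _⟩ <;> omega

lemma F_of_phi_pos (C : DoubledCrystal n) (i : Fin (n - 1)) (v : C.B)
    (h : 0 < C.phi i v) : ∃ p y, C.F i p v = some y := by
  have hH := (C.F_none i v).1
  have hP := (C.F_none i v).2
  rcases C.B1 i v with ⟨_, _, _, _, h1, h2, _⟩ | ⟨_, h1, _⟩
  · refine ⟨false, ?_⟩
    rcases hy : C.F i false v with _ | y
    · exact absurd (hH.mp hy) (by omega)
    · exact ⟨y, rfl⟩
  · by_cases hh : C.phiH i v = 0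
    · refine ⟨true, ?_⟩
      rcases hy : C.F i true v with _ | y
      · exact absurd (hP.mp hy) (by omega)
      · exact ⟨y, rfl⟩
    · refine ⟨false, ?_⟩
      rcases hy : C.F i false v with _ | y
      · exact absurd (hH.mp hy) hh
      · exact ⟨y, rfl⟩

lemma Fdown (C : DoubledCrystal n) (i : Fin (n - 1)) (k : Fin n)
    (hk : (k : ℕ) = (i : ℕ)) (p : Bool) (x y : C.B) (h : C.F i p x = some y) :
    C.phi i x = C.phi i y + 1 ∧ C.eps i y = C.eps i x + 1 ∧
      C.wt x k = C.wt y k + 1 := by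
  have hE := (C.inverse i p x y).1 h
  have hlen := C.K1len i p y x hE
  have hwt := C.K1wt i p y x hE k
  rw [if_pos hk] at hwt
  exact ⟨hlen.2, by omega, by omega⟩

lemma phi_le_wt (C : DoubledCrystal n) (i : Fin (n - 1)) (k : Fin n)
    (hk : (k : ℕ) = (i : ℕ)) :
    ∀ m (v : C.B), C.phi i v = m → C.phi i v ≤ C.wt v k := by
  intro m
  induction m with
  | zero => intro v h; omega
  | succ m ih =>
    intro v h
    obtain ⟨p, y, hy⟩ := C.F_of_phi_pos i v (by omega)
    obtain ⟨h1, _, h3⟩ := C.Fdown i k hk p v y hy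
    have := ih y (by omega)
    omega

lemma collapse_pt (C : DoubledCrystal n) (i : Fin (n - 1)) (k : Fin n)
    (hk : (k : ℕ) = (i : ℕ)) :
    ∀ m (v : C.B), C.phi i v = m → C.phi i v = C.wt v k →
      C.F i false v = C.F i true v ∧ C.E i false v = C.E i true v := by
  intro m
  induction m using Nat.strong_induction_on with
  | _ m ih =>
  intro v hm hvw
  rcases Nat.eq_zero_or_pos m with h0 | hpos
  · have hwt0 : C.wt v k = 0 := by omega
    have hwt0' : C.wt v ⟨(i : ℕ), by have := i.isLt; omega⟩ = 0 := by
      rw [show (⟨(i : ℕ), by have := i.isLt; omega⟩ : Fin n) = k from Fin.ext hk.symm]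
      exact hwt0
    have hbot := C.B1bot i v hwt0'
    have hz := C.phi_zero_aux i v (by omega)
    have hF : C.F i false v = none := (C.F_none i v).1.mpr hz.1
    have hFt : C.F i true v = none := (C.F_none i v).2.mpr hz.2
    exact ⟨by rw [hF, hFt], hbot.2⟩
  · rcases C.B1 i v with ⟨hf, he, _⟩ | ⟨heps, hphi, hone⟩
    · exact ⟨hf, he⟩
    · exfalso
      by_cases hP : C.phiP i v = 0
      · have hH : C.phiH i v ≠ 0 := by omega
        rcases ht : C.F i false v with _ | t
        · exact hH ((C.F_none i v).1.mp ht)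
        obtain ⟨h1, _, h3⟩ := C.Fdown i k hk false v t ht
        have hIH := ih (m - 1) (by omega) t (by omega) (by omega)
        have hEt : C.E i false t = some v := (C.inverse i false v t).1 ht
        have hEtt : C.E i true t = some v := by rw [← hIH.2]; exact hEt
        have hFt : C.F i true v = some t := (C.inverse i true v t).2 hEtt
        have hne : C.phiP i v ≠ 0 := by
          intro h0'
          rw [(C.F_none i v).2.mpr h0'] at hFt
          exact nomatch hFt
        exact hne hP
      · rcases ht : C.F i true v with _ | t
        · exact hP ((C.F_none i v).2.mp ht)
        obtain ⟨h1, _, h3⟩ := C.Fdown i k hk true v t ht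
        have hIH := ih (m - 1) (by omega) t (by omega) (by omega)
        have hEt : C.E i true t = some v := (C.inverse i true v t).1 ht
        have hEf : C.E i false t = some v := by rw [hIH.2]; exact hEt
        have hFf : C.F i false v = some t := (C.inverse i false v t).2 hEf
        have hs := C.Fstep i v t hFf
        have hsP := C.FstepP i v t ht
        have hpt : C.phiP i t = 0 := by omega
        have hFtt : C.F i true t = none := (C.F_none i t).2.mpr hpt
        have hFft : C.F i false t = none := by rw [hIH.1, hFtt]
        have hht : C.phiH i t = 0 := (C.F_none i t).1.mp hFft
        have hpt0 : C.phi i t = 0 := by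
          rcases C.B1 i t with ⟨_, _, _, _, hp1, hp2, _⟩ | ⟨_, hp1, _⟩ <;> omega
        omega

lemma string_invariant (C : DoubledCrystal n) (i : Fin (n - 1)) (k : Fin n)
    (hk : (k : ℕ) = (i : ℕ)) (v u : C.B) (h : C.SameString i v u) :
    (C.phi i v : ℤ) - C.wt v k = (C.phi i u : ℤ) - C.wt u k := by
  induction h with
  | rel x y hxy =>
    obtain ⟨p, hp⟩ := hxy
    obtain ⟨h1, _, h3⟩ := C.Fdown i k hk p x y hp
    omega
  | refl => rfl
  | symm _ _ _ ih => omega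
  | trans _ _ _ _ _ ih1 ih2 => omega

lemma collapsed_trans (C : DoubledCrystal n) (i : Fin (n - 1)) (v u : C.B)
    (h : C.SameString i v u) (hc : C.Collapsed i v) : C.Collapsed i u :=
  fun u' hu' => hc u' (Relation.EqvGen.trans _ _ _ h hu')

lemma collapsed_of_eq (C : DoubledCrystal n) (i : Fin (n - 1)) (k : Fin n)
    (hk : (k : ℕ) = (i : ℕ)) (v : C.B) (h : C.phi i v = C.wt v k) :
    C.Collapsed i v := by
  intro u hu
  have := C.string_invariant i k hk v u hu
  exact (C.collapse_pt i k hk (C.phi i u) u rfl (by omega)).1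

lemma eq_of_collapsed (C : DoubledCrystal n) (i : Fin (n - 1)) (k : Fin n)
    (hk : (k : ℕ) = (i : ℕ)) :
    ∀ m (v : C.B), C.phi i v = m → C.Collapsed i v → C.phi i v = C.wt v k := by
  intro m
  induction m using Nat.strong_induction_on with
  | _ m ih =>
  intro v hm hc
  rcases Nat.eq_zero_or_pos m with h0 | hpos
  · rcases C.B1 i v with ⟨_, _, _, _, _, _, _, hb⟩ | ⟨heps, hphi, hone⟩
    · rw [show (⟨(i : ℕ), by have := i.isLt; omega⟩ : Fin n) = k from Fin.ext hk.symm] at hb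
      omega
    · exfalso
      have hzP : C.phiP i v = 0 := by omega
      rcases hx : C.E i true v with _ | x
      · have := (C.E_none i v).2.mp hx; omega
      have hFx : C.F i true x = some v := (C.inverse i true x v).2 hx
      have hsx : C.SameString i v x :=
        Relation.EqvGen.symm _ _ (Relation.EqvGen.rel _ _ ⟨true, hFx⟩)
      have hFfx : C.F i false x = some v := by rw [hc x hsx]; exact hFx
      have hs := C.Fstep i x v hFfx
      have hsP := C.FstepP i x v hFx
      obtain ⟨h1, h2, _⟩ := C.Fdown i k hk false x v hFfx
      rcases C.B1 i x with ⟨_, _, he1, _, _, _, _⟩ | ⟨he1, _, ho1⟩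
      · omega
      · rcases hx' : C.E i false x with _ | x'
        · have := (C.E_none i x).1.mp hx'; omega
        have hF' : C.F i false x' = some x := (C.inverse i false x' x).2 hx'
        have hsx' : C.SameString i v x' :=
          Relation.EqvGen.trans _ _ _ hsx
            (Relation.EqvGen.symm _ _ (Relation.EqvGen.rel _ _ ⟨false, hF'⟩))
        have hFt' : C.F i true x' = some x := by rw [← hc x' hsx']; exact hF'
        have := C.FstepP i x' x hFt'
        omega
  · obtain ⟨p, y, hy⟩ := C.F_of_phi_pos i v (by omega)
    obtain ⟨h1, _, h3⟩ := C.Fdown i k hk p v y hy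
    have hcy : C.Collapsed i y :=
      C.collapsed_trans i v y (Relation.EqvGen.rel _ _ ⟨p, hy⟩) hc
    have := ih (m - 1) (by omega) y (by omega) hcy
    omega

end DoubledCrystal

/-- **Lemma (collapsed adjacent strings, part (iii)).**
Let `w → z` be an edge labeled `2` or `2'` in a doubled crystal.  Then the
`{1,1'}`-string through `w` is collapsed if and only if the `{1,1'}`-string
through `z` is collapsed and `φ_1(z) = φ_1(w)`.
(Label `1` is index `0`, label `2` is index `1`.) -/
theorem doubledCrystal_collapsed_adjacent_strings_21 {n : ℕ} (hn : 3 ≤ n)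
    (C : DoubledCrystal n) (w z : C.B) (p : Bool)
    (hedge : C.F ⟨1, by omega⟩ p w = some z) :
    (C.Collapsed ⟨0, by omega⟩ w ↔
      (C.Collapsed ⟨0, by omega⟩ z ∧
        C.phi ⟨0, by omega⟩ z = C.phi ⟨0, by omega⟩ w)) := by
  have hk0 : (((⟨0, by omega⟩ : Fin n)) : ℕ) = (((⟨0, by omega⟩ : Fin (n - 1))) : ℕ) := rfl
  set i : Fin (n - 1) := ⟨0, by omega⟩ with hi
  set j : Fin (n - 1) := ⟨1, by omega⟩ with hj
  set k : Fin n := ⟨0, by omega⟩ with hkk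
  have hE := (C.inverse j p w z).1 hedge
  have hwz : C.wt w k = C.wt z k := by
    have hwt := C.K1wt j p z w hE k
    rw [if_neg (by simp [hkk, hj]), if_neg (by simp [hkk, hj])] at hwt
    omega
  have hle_w : C.phi i w ≤ C.wt w k := C.phi_le_wt i k rfl (C.phi i w) w rfl
  have hle_z : C.phi i z ≤ C.wt z k := C.phi_le_wt i k rfl (C.phi i z) z rfl
  have hB3 := C.B3 i j p w z (Or.inr rfl) hedge
  constructor
  · intro hc
    have hw := C.eq_of_collapsed i k rfl (C.phi i w) w rfl hc
    have hz : C.phi i z = C.phi i w := by omega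
    exact ⟨C.collapsed_of_eq i k rfl z (by omega), hz⟩
  · rintro ⟨hc, hzw⟩
    have hz := C.eq_of_collapsed i k rfl (C.phi i z) z rfl hc
    exact C.collapsed_of_eq i k rfl w (by omega)
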